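/- For every n ≥ 1 and all rationally independent real numbers x₁,…,xₙ, the concept class 𝒮 = {C_w : w ∈ ℝ}, where C_w = {x ∈ ℝ : cos(wx) ≥ 0}, shatters the set {x₁,…,xₙ}: for every subset J ⊆ {1,…,n} there exists w ∈ ℝ with cos(w·x_i) ≥ 0 for all i ∈ J and cos(w·x_i) < 0 for all i ∉ J. -/

import Mathlib

/-!
It suffices to find `w` with `cos (w xⱼ - θⱼ) > 0` for all `j`, where `θⱼ = 0` for `j ∈ J` and
`θⱼ = π` otherwise. Consider `P w = ∏ⱼ ((1 + cos (w xⱼ - θⱼ)) / 2) ^ k`, a trigonometric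
polynomial whose frequencies `∑ⱼ (σⱼ - k) xⱼ` vanish only for `σ ≡ k`, by independence. Its
mean value over long intervals is therefore its constant term `(C(2k, k) / 4 ^ k) ^ n`, which
exceeds `2 ^ (-k)` for large `k`, so `P w > 2 ^ (-k)` somewhere. There every factor is `> 1/2`,
i.e. every `cos (w xⱼ - θⱼ)` is positive.
-/

/-- `x₁, …, xₙ` are rationally independent: `1, x₁, …, xₙ` are linearly
independent over `ℚ`. -/
def RatIndep {n : ℕ} (x : Fin n → ℝ) : Prop :=
  ∀ (q₀ : ℚ) (q : Fin n → ℚ),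
    (q₀ : ℝ) + ∑ i, (q i : ℝ) * x i = 0 → q₀ = 0 ∧ ∀ i, q i = 0

open Finset Complex Filter

lemma norm_integral_exp_mul_I_le {c : ℝ} (hc : c ≠ 0) (a b : ℝ) :
    ‖∫ w in a..b, exp (c * w * I)‖ ≤ 2 / |c| := by
  have hcI : (c : ℂ) * I ≠ 0 := mul_ne_zero (ofReal_ne_zero.mpr hc) I_ne_zero
  have hnorm : ∀ t : ℝ, ‖exp (c * I * t)‖ = 1 := fun t => by
    rw [show (c : ℂ) * I * t = ((c * t : ℝ) : ℂ) * I by push_cast; ring, norm_exp_ofReal_mul_I]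
  simp_rw [mul_right_comm (c : ℂ) _ I]
  rw [integral_exp_mul_complex hcI, norm_div, norm_mul, norm_I, mul_one, norm_real,
    Real.norm_eq_abs]
  gcongr
  calc ‖exp (c * I * b) - exp (c * I * a)‖ ≤ ‖exp (c * I * b)‖ + ‖exp (c * I * a)‖ :=
        norm_sub_le _ _
    _ = 2 := by rw [hnorm, hnorm]; norm_num

section TrigSum

variable {ι : Type*} {s : Finset ι} {A : ι → ℂ} {c : ι → ℝ} {i₀ : ι}

lemma norm_integral_sum_exp_sub_le [DecidableEq ι] (hi₀ : i₀ ∈ s) (hc₀ : c i₀ = 0)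
    (hc : ∀ i ∈ s, i ≠ i₀ → c i ≠ 0) (T : ℝ) :
    ‖(∫ w in (0 : ℝ)..T, ∑ i ∈ s, A i * exp (c i * w * I)) - T * A i₀‖ ≤
      ∑ i ∈ s.erase i₀, ‖A i‖ * (2 / |c i|) := by
  rw [intervalIntegral.integral_finsetSum fun i _ =>
      Continuous.intervalIntegrable (by fun_prop) _ _,
    ← add_sum_erase s _ hi₀]
  simp only [intervalIntegral.integral_const_mul, hc₀, ofReal_zero, zero_mul, exp_zero,
    intervalIntegral.integral_const, sub_zero, real_smul, mul_one]
  rw [mul_comm, add_sub_cancel_left]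
  refine (norm_sum_le _ _).trans (sum_le_sum fun i hi => ?_)
  rw [norm_mul]
  exact mul_le_mul_of_nonneg_left
    (norm_integral_exp_mul_I_le (hc i (mem_of_mem_erase hi) (ne_of_mem_erase hi)) 0 T)
    (norm_nonneg _)

lemma exists_lt_of_eq_sum_exp (hi₀ : i₀ ∈ s) (hc₀ : c i₀ = 0)
    (hc : ∀ i ∈ s, i ≠ i₀ → c i ≠ 0) {P : ℝ → ℝ}
    (hP : ∀ w, (P w : ℂ) = ∑ i ∈ s, A i * exp (c i * w * I)) {B : ℝ} (hB : B < (A i₀).re) :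
    ∃ w, B < P w := by
  classical
  -- On `[0, T]` the constant mode contributes `T * A i₀` and the others stay bounded.
  by_contra! hle
  set K := ∑ i ∈ s.erase i₀, ‖A i‖ * (2 / |c i|)
  have hPc : Continuous P := by
    have hPre : P = fun w : ℝ => (∑ i ∈ s, A i * exp (c i * w * I)).re := by
      ext w; rw [← hP, ofReal_re]
    rw [hPre]; fun_prop
  set T := (K + 1) / ((A i₀).re - B)
  have hT : T * ((A i₀).re - B) = K + 1 := div_mul_cancel₀ _ (sub_pos.mpr hB).ne'
  have hlower : T * (A i₀).re - K ≤ ∫ w in (0 : ℝ)..T, P w := by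
    have h := (abs_re_le_norm _).trans (norm_integral_sum_exp_sub_le (A := A) hi₀ hc₀ hc T)
    simp_rw [← hP] at h
    rw [intervalIntegral.integral_ofReal, sub_re, ofReal_re, re_ofReal_mul] at h
    linarith [(abs_le.mp h).1]
  have hupper : ∫ w in (0 : ℝ)..T, P w ≤ T * B := by
    have hT0 : 0 ≤ T := div_nonneg (by positivity) (sub_pos.mpr hB).le
    simpa using intervalIntegral.integral_mono_on hT0
      (hPc.intervalIntegrable (μ := MeasureTheory.volume) _ _) intervalIntegrable_const
      fun w _ => hle w
  linarith

end TrigSum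

lemma cos_pow_eq_sum_exp (z : ℂ) (m : ℕ) :
    cos z ^ m = ∑ s ∈ range (m + 1), (m.choose s / 2 ^ m : ℂ) * exp ((2 * s - m) * z * I) := by
  rw [cos, div_pow, add_pow, sum_div]
  refine sum_congr rfl fun s hs => ?_
  have hsm : s ≤ m := Nat.lt_succ_iff.mp (mem_range.mp hs)
  rw [← exp_nat_mul, ← exp_nat_mul, ← exp_add, Nat.cast_sub hsm]
  ring_nf

lemma half_one_add_cos_pow_eq_sum (k : ℕ) (a θ w : ℝ) :
    ((((1 + Real.cos (w * a - θ)) / 2) ^ k : ℝ) : ℂ) =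
      ∑ s ∈ range (2 * k + 1), ((2 * k).choose s / 4 ^ k * exp (-(((s : ℝ) - k) * θ : ℝ) * I)) *
        exp ((((s : ℝ) - k) * a : ℝ) * w * I) := by
  have hhalf : (1 + Real.cos (w * a - θ)) / 2 = Real.cos ((w * a - θ) / 2) ^ 2 := by
    rw [Real.cos_sq, mul_div_cancel₀ _ two_ne_zero]; ring
  rw [hhalf, ← pow_mul, ofReal_pow, ofReal_cos, cos_pow_eq_sum_exp]
  refine sum_congr rfl fun s _ => ?_
  rw [mul_assoc _ (exp _), ← exp_add, pow_mul]
  push_cast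
  ring_nf

lemma prod_sum_mul_exp {ι κ : Type*} [Fintype ι] [DecidableEq ι] (t : ι → Finset κ)
    (a : ι → κ → ℂ) (c : ι → κ → ℝ) (w : ℝ) :
    ∏ j, ∑ s ∈ t j, a j s * exp (c j s * w * I) =
      ∑ σ ∈ Fintype.piFinset t, (∏ j, a j (σ j)) * exp ((∑ j, c j (σ j) : ℝ) * w * I) := by
  rw [prod_univ_sum]
  refine sum_congr rfl fun σ _ => ?_
  rw [prod_mul_distrib, ← exp_sum]
  push_cast
  rw [sum_mul, sum_mul]

lemma exists_half_pow_lt_choose_div_pow (n : ℕ) :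
    ∃ k : ℕ, (1 / 2 : ℝ) ^ k < ((2 * k).choose k / 4 ^ k : ℝ) ^ n := by
  have hlim : Tendsto (fun k : ℕ => 2 ^ n * ((k : ℝ) ^ n / 2 ^ k)) atTop (nhds 0) := by
    simpa using (tendsto_pow_const_div_const_pow_of_one_lt n one_lt_two).const_mul (2 ^ n)
  obtain ⟨k, hk, hsmall⟩ :=
    ((eventually_gt_atTop 0).and (hlim.eventually (gt_mem_nhds one_pos))).exists
  have hk' : (0 : ℝ) < k := Nat.cast_pos.mpr hk
  have hbinom : 1 / (2 * k) ≤ ((2 * k).choose k / 4 ^ k : ℝ) := by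
    rw [div_le_div_iff₀ (by positivity) (by positivity), one_mul, mul_comm]
    exact_mod_cast Nat.four_pow_le_two_mul_self_mul_centralBinom k hk
  refine ⟨k, lt_of_lt_of_le ?_ (pow_le_pow_left₀ (by positivity) hbinom n)⟩
  rw [div_pow, div_pow, one_pow, one_pow, one_div_lt_one_div (by positivity) (by positivity)]
  rw [mul_div_assoc', div_lt_one (by positivity), ← mul_pow] at hsmall
  exact hsmall

lemma RatIndep.linearIndependent_int {n : ℕ} {x : Fin n → ℝ} (hx : RatIndep x) :
    LinearIndependent ℤ x := by
  refine Fintype.linearIndependent_iff.mpr fun m hm i => ?_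
  have := (hx 0 (fun i => m i) (by simpa [zsmul_eq_mul] using hm)).2 i
  exact_mod_cast this

lemma lt_of_pow_lt_prod_pow {ι : Type*} [Fintype ι] {f : ι → ℝ} (h0 : ∀ i, 0 ≤ f i)
    (h1 : ∀ i, f i ≤ 1) {a : ℝ} {k : ℕ} (h : a ^ k < ∏ i, f i ^ k) (j : ι) : a < f j := by
  classical
  refine lt_of_pow_lt_pow_left₀ k (h0 j) (h.trans_le ?_)
  simpa using prod_le_prod_of_subset_of_le_one (subset_univ {j})
    (fun i _ => pow_nonneg (h0 i) k) fun i _ _ => pow_le_one₀ (h0 i) (h1 i)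

lemma exists_forall_cos_sub_pos {ι : Type*} [Fintype ι] {x : ι → ℝ} (hx : LinearIndependent ℤ x)
    (θ : ι → ℝ) : ∃ w : ℝ, ∀ j, 0 < Real.cos (w * x j - θ j) := by
  classical
  obtain ⟨k, hk⟩ := exists_half_pow_lt_choose_div_pow (Fintype.card ι)
  set S := Fintype.piFinset fun _ : ι => range (2 * k + 1)
  set σ₀ : ι → ℕ := fun _ => k
  have hσ₀ : σ₀ ∈ S := by simp only [S, σ₀, Fintype.mem_piFinset, mem_range]; omega
  have hfreq : ∀ σ ∈ S, σ ≠ σ₀ → ∑ j, ((σ j : ℝ) - k) * x j ≠ 0 := by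
    intro σ _ hne hzero
    refine hne (funext fun j => ?_)
    have := Fintype.linearIndependent_iff.mp hx (fun j => (σ j : ℤ) - k)
      (by push_cast [zsmul_eq_mul]; exact hzero) j
    change σ j = k
    omega
  obtain ⟨w, hw⟩ := exists_lt_of_eq_sum_exp (B := (1 / 2) ^ k) hσ₀ (by simp [σ₀]) hfreq
    (P := fun w => ∏ j, ((1 + Real.cos (w * x j - θ j)) / 2) ^ k)
    (fun w => by
      rw [ofReal_prod]
      simp_rw [half_one_add_cos_pow_eq_sum]
      exact prod_sum_mul_exp _ _ _ w)
    (by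
      simp only [σ₀, sub_self, zero_mul, ofReal_zero, neg_zero, exp_zero, mul_one, prod_const,
        card_univ]
      rw [← ofReal_natCast, ← ofReal_ofNat, ← ofReal_pow, ← ofReal_div, ← ofReal_pow, ofReal_re]
      exact hk)
  refine ⟨w, fun j => ?_⟩
  have hhalf := lt_of_pow_lt_prod_pow
    (fun i => by linarith [Real.neg_one_le_cos (w * x i - θ i)])
    (fun i => by linarith [Real.cos_le_one (w * x i - θ i)]) hw j
  linarith

theorem stmt5 (n : ℕ) (x : Fin n → ℝ) (hx : RatIndep x)
    (J : Set (Fin n)) :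
    ∃ w : ℝ, (∀ i ∈ J, 0 ≤ Real.cos (w * x i)) ∧ ∀ i ∉ J, Real.cos (w * x i) < 0 := by
  classical
  obtain ⟨w, hw⟩ := exists_forall_cos_sub_pos hx.linearIndependent_int
    fun j => if j ∈ J then 0 else Real.pi
  refine ⟨w, fun i hi => ?_, fun i hi => ?_⟩
  · simpa [hi] using (hw i).le
  · simpa [hi, Real.cos_sub_pi] using hw i
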